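/- Let R ≤ M_3(ℂ) be a quantum graph. If R is isomorphic to VT^3_4, then its complement R̄ is isomorphic to VT^3_4. -/

import Mathlib

/-!
Conjugation by a unitary preserves the trace and the form `(a, b) ↦ Tr(a†b)`, so it commutes
with taking complements, and it suffices to show that the complement of `VT34` itself is
isomorphic to `VT34`. The Weyl matrices `ûʲ v̂ᵏ` (`0 ≤ j, k < 3`) form an orthogonal basis of
`M₃(ℂ)` containing `û⁰ v̂⁰ = 1`, so that complement is spanned by the four mixed ones
`ûv̂, ûv̂², û²v̂, û²v̂²`. A Clifford unitary maps these onto multiples of `û, v̂, v̂², û²`.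
-/

namespace QG

open Matrix

abbrev Mat (n : ℕ) := Matrix (Fin n) (Fin n) ℂ

/-- `R` is a quantum graph: closed under conjugate transpose and every element is traceless. -/
def IsQuantumGraph {n : ℕ} (R : Submodule ℂ (Mat n)) : Prop :=
  ∀ a ∈ R, aᴴ ∈ R ∧ a.trace = 0

/-- Conjugation `a ↦ u * a * uᴴ` as a linear map. -/
noncomputable def conjMap {n : ℕ} (u : Mat n) : Mat n →ₗ[ℂ] Mat n :=
  (LinearMap.mulLeft ℂ u).comp (LinearMap.mulRight ℂ uᴴ)

/-- Quantum graphs `R`, `S` are isomorphic if `u R uᴴ = S` for some unitary `u`. -/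
def Iso {n : ℕ} (R S : Submodule ℂ (Mat n)) : Prop :=
  ∃ u ∈ Matrix.unitaryGroup (Fin n) ℂ, R.map (conjMap u) = S

/-- The complement of a quantum graph: all traceless matrices orthogonal to `R`. -/
noncomputable def qCompl {n : ℕ} (R : Submodule ℂ (Mat n)) : Submodule ℂ (Mat n) where
  carrier := {a | a.trace = 0 ∧ ∀ b ∈ R, (aᴴ * b).trace = 0}
  add_mem' := by
    rintro a b ⟨ha1, ha2⟩ ⟨hb1, hb2⟩
    refine ⟨by simp [ha1, hb1], fun c hc => ?_⟩
    simp [Matrix.conjTranspose_add, Matrix.add_mul, ha2 c hc, hb2 c hc]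
  zero_mem' := by simp
  smul_mem' := by
    rintro c a ⟨ha1, ha2⟩
    refine ⟨by simp [ha1], fun b hb => ?_⟩
    simp [Matrix.conjTranspose_smul, Matrix.smul_mul, ha2 b hb]

/-- The primitive third root of unity `ω = e^{2πi/3}`. -/
noncomputable def omega3 : ℂ := Complex.exp (2 * (Real.pi : ℂ) * Complex.I / 3)

/-- The shift matrix `û = e₂₁ + e₃₂ + e₁₃`. -/
def shiftU : Mat 3 := !![0,0,1; 1,0,0; 0,1,0]

/-- The clock matrix `v̂ = diag(1, ω, ω²)`. -/
noncomputable def clockV : Mat 3 := !![1,0,0; 0,omega3,0; 0,0,omega3^2]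

/-- `VT34 = ℂû + ℂû² + ℂv̂ + ℂv̂²`. -/
noncomputable def VT34 : Submodule ℂ (Mat 3) :=
  Submodule.span ℂ {shiftU, shiftU ^ 2, clockV, clockV ^ 2}

lemma isPrimitiveRoot_omega3 : IsPrimitiveRoot omega3 3 := by
  simpa [omega3] using Complex.isPrimitiveRoot_exp 3 (by norm_num)

lemma one_add_omega3_add_sq : 1 + omega3 + omega3 ^ 2 = 0 := by
  simpa [Finset.sum_range_succ] using isPrimitiveRoot_omega3.geom_sum_eq_zero (by norm_num)

lemma conj_omega3 : (starRingEnd ℂ) omega3 = omega3 ^ 2 := by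
  have hcube := isPrimitiveRoot_omega3.pow_eq_one
  have hnorm := Complex.norm_eq_one_of_pow_eq_one hcube (by norm_num)
  refine mul_right_cancel₀ (isPrimitiveRoot_omega3.ne_zero three_ne_zero) ?_
  rw [Complex.conj_mul', hnorm]
  push_cast
  linear_combination -hcube

section Conjugation

variable {n : ℕ}

lemma conjMap_apply (u a : Mat n) : conjMap u a = u * a * uᴴ := by
  simp [conjMap, Matrix.mul_assoc]

lemma conjMap_mul (w u : Mat n) : conjMap (w * u) = conjMap w ∘ₗ conjMap u := by
  ext1 a
  simp [conjMap_apply, Matrix.conjTranspose_mul, Matrix.mul_assoc]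

lemma conjMap_one : conjMap (1 : Mat n) = LinearMap.id := by
  ext1 a
  simp [conjMap_apply]

lemma conjMap_conjTranspose_comp {u : Mat n} (hu : u ∈ unitaryGroup (Fin n) ℂ) :
    conjMap uᴴ ∘ₗ conjMap u = LinearMap.id := by
  rw [← conjMap_mul, ← star_eq_conjTranspose, Unitary.star_mul_self_of_mem hu, conjMap_one]

lemma conjMap_comp_conjTranspose {u : Mat n} (hu : u ∈ unitaryGroup (Fin n) ℂ) :
    conjMap u ∘ₗ conjMap uᴴ = LinearMap.id := by
  rw [← conjMap_mul, ← star_eq_conjTranspose, Unitary.mul_star_self_of_mem hu, conjMap_one]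

lemma trace_conjMap {u : Mat n} (hu : u ∈ unitaryGroup (Fin n) ℂ) (a : Mat n) :
    (conjMap u a).trace = a.trace := by
  rw [conjMap_apply, trace_mul_cycle, ← star_eq_conjTranspose, Unitary.star_mul_self_of_mem hu,
    Matrix.one_mul]

lemma conjTranspose_conjMap_mul_conjMap {u : Mat n} (hu : u ∈ unitaryGroup (Fin n) ℂ)
    (a b : Mat n) : (conjMap u a)ᴴ * conjMap u b = conjMap u (aᴴ * b) := by
  have h : uᴴ * u = 1 := Unitary.star_mul_self_of_mem hu
  simp only [conjMap_apply, conjTranspose_mul, conjTranspose_conjTranspose, Matrix.mul_assoc]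
  rw [← Matrix.mul_assoc uᴴ u, h, Matrix.one_mul]

lemma Iso.trans {R S T : Submodule ℂ (Mat n)} (hRS : Iso R S) (hST : Iso S T) : Iso R T := by
  obtain ⟨u, hu, rfl⟩ := hRS
  obtain ⟨w, hw, rfl⟩ := hST
  exact ⟨w * u, mul_mem hw hu, by rw [conjMap_mul, Submodule.map_comp]⟩

lemma conjMap_mem_qCompl_map {u : Mat n} (hu : u ∈ unitaryGroup (Fin n) ℂ)
    {R : Submodule ℂ (Mat n)} {a : Mat n} (ha : a ∈ qCompl R) :
    conjMap u a ∈ qCompl (R.map (conjMap u)) := by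
  refine ⟨(trace_conjMap hu a).trans ha.1, ?_⟩
  rintro _ ⟨b, hb, rfl⟩
  rw [conjTranspose_conjMap_mul_conjMap hu, trace_conjMap hu]
  exact ha.2 b hb

lemma qCompl_map_conjMap {u : Mat n} (hu : u ∈ unitaryGroup (Fin n) ℂ)
    (R : Submodule ℂ (Mat n)) : (qCompl R).map (conjMap u) = qCompl (R.map (conjMap u)) := by
  have hu' : uᴴ ∈ unitaryGroup (Fin n) ℂ := Unitary.star_mem hu
  refine le_antisymm (Submodule.map_le_iff_le_comap.mpr fun a ha ↦
    conjMap_mem_qCompl_map hu ha) fun a ha ↦ ⟨conjMap uᴴ a, ?_, ?_⟩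
  · have h := conjMap_mem_qCompl_map hu' ha
    rwa [← Submodule.map_comp, conjMap_conjTranspose_comp hu, Submodule.map_id] at h
  · rw [← LinearMap.comp_apply, conjMap_comp_conjTranspose hu, LinearMap.id_apply]

lemma Iso.qCompl {R S : Submodule ℂ (Mat n)} (h : Iso R S) : Iso (qCompl R) (qCompl S) := by
  obtain ⟨u, hu, rfl⟩ := h
  exact ⟨u, hu, qCompl_map_conjMap hu R⟩

lemma mem_qCompl_span {s : Set (Mat n)} {a : Mat n} :
    a ∈ qCompl (Submodule.span ℂ s) ↔ a.trace = 0 ∧ ∀ b ∈ s, (aᴴ * b).trace = 0 :=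
  and_congr_right fun _ ↦
    Submodule.span_le (p := LinearMap.ker (traceLinearMap _ ℂ ℂ ∘ₗ LinearMap.mulLeft ℂ aᴴ))

lemma trace_conjTranspose_mul_eq_zero_comm {a b : Mat n} :
    (aᴴ * b).trace = 0 ↔ (bᴴ * a).trace = 0 := by
  rw [← star_eq_zero, ← trace_conjTranspose, conjTranspose_mul, conjTranspose_conjTranspose]

end Conjugation

noncomputable def mixedWeylSpan : Submodule ℂ (Mat 3) :=
  Submodule.span ℂ
    {shiftU * clockV, shiftU * clockV ^ 2, shiftU ^ 2 * clockV, shiftU ^ 2 * clockV ^ 2}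

lemma mixedWeylSpan_le_qCompl_VT34 : mixedWeylSpan ≤ qCompl VT34 := by
  have hω := one_add_omega3_add_sq
  rw [mixedWeylSpan, Submodule.span_le]
  intro g hg
  rw [SetLike.mem_coe, VT34, mem_qCompl_span]
  simp only [Set.mem_insert_iff, Set.mem_singleton_iff, forall_eq_or_imp, forall_eq] at hg ⊢
  rcases hg with rfl | rfl | rfl | rfl <;> refine ⟨?_, ?_, ?_, ?_, ?_⟩ <;>
    simp [trace_fin_three, shiftU, clockV, mul_apply, Fin.sum_univ_three, pow_two,
      conj_omega3] <;> grind

lemma qCompl_VT34_le_mixedWeylSpan : qCompl VT34 ≤ mixedWeylSpan := by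
  have hω := one_add_omega3_add_sq
  intro a ha
  rw [VT34, mem_qCompl_span] at ha
  simp only [Set.mem_insert_iff, Set.mem_singleton_iff, forall_eq_or_imp, forall_eq,
    trace_conjTranspose_mul_eq_zero_comm (a := a)] at ha
  obtain ⟨h0, hU, hU2, hV, hV2⟩ := ha
  -- Expansion in the orthogonal Weyl basis, where `Tr(g†g) = 3`; the hypotheses say that the
  -- coefficients of `1, û, û², v̂, v̂²` vanish.
  have hexp : a = (3⁻¹ * ((shiftU * clockV)ᴴ * a).trace) • (shiftU * clockV)
      + (3⁻¹ * ((shiftU * clockV ^ 2)ᴴ * a).trace) • (shiftU * clockV ^ 2)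
      + (3⁻¹ * ((shiftU ^ 2 * clockV)ᴴ * a).trace) • (shiftU ^ 2 * clockV)
      + (3⁻¹ * ((shiftU ^ 2 * clockV ^ 2)ᴴ * a).trace) • (shiftU ^ 2 * clockV ^ 2) := by
    simp [trace_fin_three, shiftU, clockV, mul_apply, Fin.sum_univ_three, pow_two,
      conj_omega3] at h0 hU hU2 hV hV2
    ext i j
    fin_cases i <;> fin_cases j <;>
      simp [trace_fin_three, shiftU, clockV, mul_apply, Fin.sum_univ_three, pow_two,
        conj_omega3] <;> grind
  rw [hexp]
  refine add_mem (add_mem (add_mem ?_ ?_) ?_) ?_ <;>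
    exact Submodule.smul_mem _ _ (Submodule.subset_span (by simp))

lemma ofReal_sqrt_three_sq : ((Real.sqrt 3 : ℝ) : ℂ) ^ 2 = 3 := by
  rw [← Complex.ofReal_pow, Real.sq_sqrt (by norm_num)]
  norm_num

-- Up to phases, conjugation by `cliffordW` acts on the exponents `(j, k)` of `ûʲ v̂ᵏ` by the
-- symplectic map `(j, k) ↦ (2j + 2k, 2j + k)` of `(ℤ/3)²`.
noncomputable def cliffordW : Mat 3 :=
  ((Real.sqrt 3 : ℝ) : ℂ)⁻¹ • !![1, 1, omega3; 1, omega3, 1; omega3 ^ 2, omega3, omega3]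

lemma cliffordW_mem_unitaryGroup : cliffordW ∈ unitaryGroup (Fin 3) ℂ := by
  have hω := one_add_omega3_add_sq
  have hs := ofReal_sqrt_three_sq
  rw [mem_unitaryGroup_iff]
  ext i j
  fin_cases i <;> fin_cases j <;>
    simp [cliffordW, mul_apply, Fin.sum_univ_three, conj_omega3, one_apply] <;>
    grind

lemma conjMap_cliffordW_weyl :
    conjMap cliffordW (shiftU * clockV) = omega3 • shiftU ∧
      conjMap cliffordW (shiftU * clockV ^ 2) = clockV ∧
      conjMap cliffordW (shiftU ^ 2 * clockV) = omega3 • clockV ^ 2 ∧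
      conjMap cliffordW (shiftU ^ 2 * clockV ^ 2) = omega3 • shiftU ^ 2 := by
  have hω := one_add_omega3_add_sq
  have hs := ofReal_sqrt_three_sq
  simp only [conjMap_apply]
  refine ⟨?_, ?_, ?_, ?_⟩ <;> ext i j <;> fin_cases i <;> fin_cases j <;>
    simp [cliffordW, shiftU, clockV, mul_apply, Fin.sum_univ_three, pow_two, conj_omega3] <;>
    grind

lemma map_conjMap_cliffordW_mixedWeylSpan : mixedWeylSpan.map (conjMap cliffordW) = VT34 := by
  have hω : IsUnit omega3 := isPrimitiveRoot_omega3.isUnit three_ne_zero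
  obtain ⟨h1, h2, h3, h4⟩ := conjMap_cliffordW_weyl
  rw [mixedWeylSpan, Submodule.map_span, VT34]
  simp only [Set.image_insert_eq, Set.image_singleton, h1, h2, h3, h4, Submodule.span_insert,
    Submodule.span_singleton_smul_eq hω]
  ac_rfl

lemma qCompl_VT34 : qCompl VT34 = mixedWeylSpan :=
  le_antisymm qCompl_VT34_le_mixedWeylSpan mixedWeylSpan_le_qCompl_VT34

lemma iso_qCompl_VT34 : Iso (qCompl VT34) VT34 := by
  rw [qCompl_VT34]
  exact ⟨cliffordW, cliffordW_mem_unitaryGroup, map_conjMap_cliffordW_mixedWeylSpan⟩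

theorem stmt17_general (R : Submodule ℂ (Mat 3))
    (hiso : Iso R VT34) : Iso (qCompl R) VT34 :=
  hiso.qCompl.trans iso_qCompl_VT34

/-- if a quantum graph `R ≤ M_3(ℂ)` is isomorphic to `VT34`, then so is its
complement. -/
theorem stmt17 (R : Submodule ℂ (Mat 3)) (hQG : IsQuantumGraph R)
    (hiso : Iso R VT34) : Iso (qCompl R) VT34 :=
  stmt17_general R hiso

end QG
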